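/- arXiv:1010.2790 — 7 statements merged into one kernel-verified Lean document; each statement's English description precedes it below -/
import Mathlib

section
/- Let n ≥ 1, let C be the n×n integer matrix with C_{jk} = (-1)^(k-j+1)(2j-1)(n-k+1) for j ≤ k and C_{jk}=C_{kj} otherwise, and let D be the n×n adjacency matrix of the graph L_n, i.e. D_{11} = 1, D_{i,i+1} = D_{i+1,i} = 1 for 1 ≤ i ≤ n-1, and D_{ij} = 0 otherwise. Then -C·(2·I_n + D) = (2n+1)·I_n. -/
def Cent (n j k : ℕ) : ℤ :=
  if j ≤ k then (-1) ^ (k - j + 1) * (2 * (j : ℤ) - 1) * ((n : ℤ) - k + 1)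
  else (-1) ^ (j - k + 1) * (2 * (k : ℤ) - 1) * ((n : ℤ) - j + 1)

def Cmat (n : ℕ) : Matrix (Fin n) (Fin n) ℤ :=
  fun j k => Cent n (j.val + 1) (k.val + 1)

/-- The adjacency matrix of the graph `L_n`: a loop at vertex `1` and edges
`i — (i+1)` for `1 ≤ i ≤ n-1` (0-indexed here). -/
def Dmat (n : ℕ) : Matrix (Fin n) (Fin n) ℤ :=
  fun i j => if (i.val = 0 ∧ j.val = 0) ∨ i.val + 1 = j.val ∨ j.val + 1 = i.val then 1 else 0

def cc (n j k : ℕ) : ℤ := Cent n (j+1) (k+1)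

lemma cc_eq (n j k : ℕ) :
    cc n j k = if j ≤ k then (-1)^(k-j+1)*(2*(j:ℤ)+1)*((n:ℤ)-k)
      else (-1)^(j-k+1)*(2*(k:ℤ)+1)*((n:ℤ)-j) := by
  simp only [cc, Cent, Nat.add_le_add_iff_right, Nat.succ_sub_succ]
  split_ifs with h <;> push_cast <;> ring

lemma L1 (n i j : ℕ) (hi1 : 1 ≤ i) (hi2 : i + 1 < n) :
    cc n j (i-1) + 2 * cc n j i + cc n j (i+1)
      = if j = i then -(2*(n:ℤ)+1) else 0 := by
  obtain ⟨m, rfl⟩ : ∃ m, i = m + 1 := ⟨i - 1, by omega⟩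
  simp only [Nat.add_sub_cancel]
  rcases lt_trichotomy j (m+1) with h | rfl | h
  · obtain ⟨d, rfl⟩ : ∃ d, m = j + d := ⟨m - j, by omega⟩
    rw [if_neg (by omega)]
    rw [cc_eq, cc_eq, cc_eq, if_pos (by omega), if_pos (by omega), if_pos (by omega)]
    rw [show j + d - j + 1 = d + 1 from by omega,
        show j + d + 1 - j + 1 = d + 2 from by omega,
        show j + d + 1 + 1 - j + 1 = d + 3 from by omega]
    push_cast; ring
  · rw [if_pos rfl]
    rw [cc_eq, cc_eq, cc_eq, if_neg (by omega), if_pos (by omega), if_pos (by omega)]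
    rw [show m + 1 - m + 1 = 2 from by omega,
        show m + 1 - (m+1) + 1 = 1 from by omega,
        show m + 1 + 1 - (m+1) + 1 = 2 from by omega]
    push_cast; ring
  · rcases Nat.eq_or_lt_of_le h with h2 | h3
    · obtain rfl : j = m + 2 := by omega
      rw [if_neg (by omega)]
      rw [cc_eq, cc_eq, cc_eq, if_neg (by omega), if_neg (by omega), if_pos (by omega)]
      rw [show m + 2 - m + 1 = 3 from by omega,
          show m + 2 - (m+1) + 1 = 2 from by omega,
          show m + 1 + 1 - (m+2) + 1 = 1 from by omega]
      push_cast; ring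
    · obtain ⟨d, rfl⟩ : ∃ d, j = m + 3 + d := ⟨j - m - 3, by omega⟩
      rw [if_neg (by omega)]
      rw [cc_eq, cc_eq, cc_eq, if_neg (by omega), if_neg (by omega), if_neg (by omega)]
      rw [show m + 3 + d - m + 1 = d + 4 from by omega,
          show m + 3 + d - (m+1) + 1 = d + 3 from by omega,
          show m + 3 + d - (m+1+1) + 1 = d + 2 from by omega]
      push_cast; ring

lemma L2 (n j : ℕ) (hn : 2 ≤ n) :
    3 * cc n j 0 + cc n j 1 = if j = 0 then -(2*(n:ℤ)+1) else 0 := by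
  rcases Nat.eq_zero_or_pos j with rfl | hj
  · rw [if_pos rfl, cc_eq, cc_eq, if_pos (by omega), if_pos (by omega)]
    push_cast; ring
  · rcases Nat.eq_or_lt_of_le hj with h1 | h1
    · obtain rfl : j = 1 := h1.symm
      rw [if_neg (by omega), cc_eq, cc_eq, if_neg (by omega), if_pos (by omega)]
      norm_num
    · obtain ⟨d, rfl⟩ : ∃ d, j = d + 2 := ⟨j - 2, by omega⟩
      rw [if_neg (by omega), cc_eq, cc_eq, if_neg (by omega), if_neg (by omega)]
      rw [show d + 2 - 0 + 1 = d + 3 from by omega,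
          show d + 2 - 1 + 1 = d + 2 from by omega]
      push_cast; ring

lemma L3 (n j : ℕ) (hn : 2 ≤ n) (hj : j < n) :
    cc n j (n-2) + 2 * cc n j (n-1) = if j = n - 1 then -(2*(n:ℤ)+1) else 0 := by
  obtain ⟨m, rfl⟩ : ∃ m, n = m + 2 := ⟨n - 2, by omega⟩
  rw [show m + 2 - 2 = m from by omega, show m + 2 - 1 = m + 1 from by omega]
  rcases lt_trichotomy j m with h | rfl | h
  · obtain ⟨d, rfl⟩ : ∃ d, m = j + d + 1 := ⟨m - j - 1, by omega⟩
    rw [if_neg (by omega), cc_eq, cc_eq, if_pos (by omega), if_pos (by omega)]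
    rw [show j + d + 1 - j + 1 = d + 2 from by omega,
        show j + d + 1 + 1 - j + 1 = d + 3 from by omega]
    push_cast; ring
  · rw [if_neg (by omega), cc_eq, cc_eq, if_pos (by omega), if_pos (by omega)]
    rw [show j - j + 1 = 1 from by omega, show j + 1 - j + 1 = 2 from by omega]
    push_cast; ring
  · obtain rfl : j = m + 1 := by omega
    rw [if_pos rfl, cc_eq, cc_eq, if_neg (by omega), if_pos (by omega)]
    rw [show m + 1 - m + 1 = 2 from by omega, show m + 1 - (m+1) + 1 = 1 from by omega]
    push_cast; ring

lemma key (n j i : ℕ) (hj : j < n) (hi : i < n) :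
    (∑ k ∈ Finset.range n, -(cc n j k) *
        (2 * (if k = i then (1:ℤ) else 0) +
          (if (k = 0 ∧ i = 0) ∨ k + 1 = i ∨ i + 1 = k then 1 else 0)))
      = if j = i then 2*(n:ℤ)+1 else 0 := by
  rcases Nat.eq_zero_or_pos i with rfl | hi1
  · have hpt : ∀ k, -(cc n j k) * (2 * (if k = 0 then (1:ℤ) else 0) +
        (if (k = 0 ∧ 0 = 0) ∨ k + 1 = 0 ∨ 0 + 1 = k then 1 else 0))
        = (if k = 0 then -3 * cc n j k else 0) + (if k = 1 then -cc n j k else 0) := by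
      intro k
      rw [if_congr (show ((k = 0 ∧ 0 = 0) ∨ k + 1 = 0 ∨ 0 + 1 = k) ↔ (k = 0 ∨ k = 1) from by
        omega) rfl rfl]
      split_ifs <;> first | ring1 | omega | (exfalso; omega)
    rw [Finset.sum_congr rfl fun k _ => hpt k, Finset.sum_add_distrib,
        Finset.sum_ite_eq', Finset.sum_ite_eq']
    simp only [Finset.mem_range]
    rcases Nat.lt_or_ge n 2 with h2 | h2
    · obtain rfl : n = 1 := by omega
      obtain rfl : j = 0 := by omega
      rw [if_pos (by omega), if_neg (by omega), if_pos rfl, cc_eq]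
      norm_num
    · rw [if_pos (by omega), if_pos (by omega)]
      have h3 := L2 n j h2
      split_ifs at h3 ⊢ <;> linarith
  · have hpt : ∀ k, -(cc n j k) * (2 * (if k = i then (1:ℤ) else 0) +
        (if (k = 0 ∧ i = 0) ∨ k + 1 = i ∨ i + 1 = k then 1 else 0))
        = (if k = i - 1 then -cc n j k else 0) + (if k = i then -2 * cc n j k else 0)
          + (if k = i + 1 then -cc n j k else 0) := by
      intro k
      split_ifs <;> first | ring1 | omega | (exfalso; omega)
    rw [Finset.sum_congr rfl fun k _ => hpt k, Finset.sum_add_distrib,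
        Finset.sum_add_distrib, Finset.sum_ite_eq', Finset.sum_ite_eq', Finset.sum_ite_eq']
    simp only [Finset.mem_range]
    rw [if_pos (by omega), if_pos (by omega)]
    rcases Nat.lt_or_ge (i+1) n with h2 | h2
    · rw [if_pos h2]
      have h3 := L1 n i j hi1 h2
      split_ifs at h3 ⊢ <;> linarith
    · rw [if_neg (by omega)]
      have h3 := L3 n j (by omega) hj
      rw [show n - 2 = i - 1 from by omega, show n - 1 = i from by omega] at h3
      split_ifs at h3 ⊢ <;> linarith

theorem stmt_2 (n : ℕ) (hn : 1 ≤ n) :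
    -(Cmat n) * ((2 : ℤ) • (1 : Matrix (Fin n) (Fin n) ℤ) + Dmat n)
      = (2 * (n : ℤ) + 1) • (1 : Matrix (Fin n) (Fin n) ℤ) := by
  ext j i
  rw [Matrix.mul_apply]
  have e1 : ∀ k : Fin n, (-(Cmat n)) j k *
      ((2 : ℤ) • (1 : Matrix (Fin n) (Fin n) ℤ) + Dmat n) k i
      = -(cc n j.val k.val) * (2 * (if (k:ℕ) = (i:ℕ) then (1:ℤ) else 0) +
          (if ((k:ℕ) = 0 ∧ (i:ℕ) = 0) ∨ (k:ℕ) + 1 = (i:ℕ) ∨ (i:ℕ) + 1 = (k:ℕ) then 1 else 0)) := by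
    intro k
    simp only [Matrix.add_apply, Matrix.smul_apply, Matrix.one_apply, Matrix.neg_apply,
      Dmat, Cmat, cc, smul_eq_mul, Fin.ext_iff]
  rw [Finset.sum_congr rfl (fun k _ => e1 k)]
  rw [Fin.sum_univ_eq_sum_range (fun k => -(cc n j.val k) *
      (2 * (if k = (i:ℕ) then (1:ℤ) else 0) +
        (if (k = 0 ∧ (i:ℕ) = 0) ∨ k + 1 = (i:ℕ) ∨ (i:ℕ) + 1 = k then 1 else 0))) n]
  rw [key n j.val i.val j.2 i.2]
  simp [Matrix.smul_apply, Matrix.one_apply, Fin.ext_iff]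
end

section
/- Let n ≥ 1 and let K be a field whose characteristic does not divide 2n+1. Then the n×n matrix C over K with entries C_{jk} = (-1)^(k-j+1)(2j-1)(n-k+1) for j ≤ k and C_{jk} = C_{kj} for j > k is invertible (equivalently, has rank n). -/
/-- The (negated, scaled) inverse: a tridiagonal matrix. -/
def Bmat (n : ℕ) : Matrix (Fin n) (Fin n) ℤ :=
  fun l k =>
    (if (l : ℕ) + 1 = (k : ℕ) then (-1 : ℤ) else 0) +
    (if (l : ℕ) = (k : ℕ) then (if (k : ℕ) = 0 then (-3 : ℤ) else -2) else 0) +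
    (if (l : ℕ) = (k : ℕ) + 1 then (-1 : ℤ) else 0)

lemma npow (a b : ℕ) : ((-1 : ℤ)) ^ (2 * a + b) = (-1) ^ b := by
  rw [pow_add, pow_mul, neg_one_sq, one_pow, one_mul]

lemma cent_le (n j k : ℕ) (h : j ≤ k) :
    Cent n j k = (-1) ^ (j + k + 1) * (2 * (j : ℤ) - 1) * ((n : ℤ) - k + 1) := by
  obtain ⟨d, rfl⟩ := Nat.exists_eq_add_of_le h
  rw [Cent, if_pos h, show j + d - j + 1 = d + 1 by omega,
    show j + (j + d) + 1 = 2 * j + (d + 1) by omega, npow]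

lemma cent_ge (n j k : ℕ) (h : k ≤ j) :
    Cent n j k = (-1) ^ (j + k + 1) * (2 * (k : ℤ) - 1) * ((n : ℤ) - j + 1) := by
  obtain ⟨d, rfl⟩ := Nat.exists_eq_add_of_le h
  rcases Nat.eq_zero_or_pos d with rfl | hd
  · simp only [Nat.add_zero]
    rw [Cent, if_pos le_rfl, show k - k + 1 = 0 + 1 by omega,
      show k + k + 1 = 2 * k + (0 + 1) by omega, npow]
  · rw [Cent, if_neg (by omega), show k + d - k + 1 = d + 1 by omega,
      show k + d + k + 1 = 2 * k + (d + 1) by omega, npow]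

lemma sum_delta {n : ℕ} (f : Fin n → ℤ) (m : ℕ) (c : ℤ) :
    (∑ l : Fin n, f l * (if (l : ℕ) = m then c else 0)) =
      if h : m < n then f ⟨m, h⟩ * c else 0 := by
  split_ifs with h
  · rw [Finset.sum_eq_single (⟨m, h⟩ : Fin n)]
    · simp
    · intro b _ hb
      rw [if_neg (by simpa [Fin.ext_iff] using hb), mul_zero]
    · simp
  · apply Finset.sum_eq_zero
    intro l _
    rw [if_neg (by omega), mul_zero]

lemma sum_delta' {n : ℕ} (f : Fin n → ℤ) (m : ℕ) (c : ℤ) :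
    (∑ l : Fin n, f l * (if (l : ℕ) + 1 = m then c else 0)) =
      if h : 0 < m ∧ m ≤ n then f ⟨m - 1, by omega⟩ * c else 0 := by
  split_ifs with h
  · rw [Finset.sum_eq_single (⟨m - 1, by omega⟩ : Fin n)]
    · rw [if_pos (by simp; omega)]
    · intro b _ hb
      rw [if_neg (by simp [Fin.ext_iff] at hb ⊢; omega), mul_zero]
    · simp
  · apply Finset.sum_eq_zero
    intro l _
    rw [if_neg (by omega), mul_zero]

lemma key_s3 (n : ℕ) : Cmat n * Bmat n = ((2 * (n : ℤ) + 1)) • 1 := by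
  ext j k
  rw [Matrix.mul_apply]
  simp only [Bmat, mul_add, Finset.sum_add_distrib, sum_delta, sum_delta',
    Matrix.smul_apply, Matrix.one_apply, smul_eq_mul, Cmat, Fin.val_mk]
  have hj : (j : ℕ) < n := j.isLt
  have hk : (k : ℕ) < n := k.isLt
  have hjk : (j = k) ↔ ((j : ℕ) = (k : ℕ)) := Fin.ext_iff
  rw [dif_pos hk]
  rcases Nat.eq_zero_or_pos (k : ℕ) with hk0 | hk0
  · -- k = 0 column
    rw [dif_neg (by omega), if_pos hk0]
    rcases Nat.lt_or_ge ((k : ℕ) + 1) n with hkn | hkn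
    · rw [dif_pos hkn]
      rcases Nat.eq_zero_or_pos (j : ℕ) with hj0 | hj0
      · rw [if_pos (hjk.2 (by omega))]
        rw [cent_le n _ _ (by omega), cent_le n _ _ (by omega), hj0, hk0]
        push_cast
        ring
      · have hne : ¬(j = k) := fun h => absurd (hjk.1 h) (by omega)
        rw [if_neg hne]
        rw [cent_ge n _ _ (by omega), cent_ge n _ _ (by omega), hk0]
        push_cast
        ring
    · -- n = 1
      rw [dif_neg (by omega)]
      have hj0 : (j : ℕ) = 0 := by omega
      rw [if_pos (hjk.2 (by omega))]
      rw [cent_le n _ _ (by omega), hj0, hk0]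
      have hn1 : (n : ℤ) = 1 := by exact_mod_cast congrArg Nat.cast (by omega : n = 1)
      rw [hn1]
      norm_num
  · -- k ≥ 1
    have hk0' : ¬((k : ℕ) = 0) := by omega
    rw [dif_pos ⟨hk0, by omega⟩, if_neg hk0']
    have hidx : (k : ℕ) - 1 + 1 = (k : ℕ) := by omega
    rw [hidx]
    rcases Nat.lt_trichotomy (j : ℕ) (k : ℕ) with hlt | heq | hgt
    · -- j < k : all cent_le
      have hne : ¬(j = k) := fun h => absurd (hjk.1 h) (by omega)
      rw [if_neg hne]
      rcases Nat.lt_or_ge ((k : ℕ) + 1) n with hkn | hkn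
      · rw [dif_pos hkn,
          cent_le n _ _ (by omega), cent_le n _ _ (by omega), cent_le n _ _ (by omega)]
        push_cast
        ring
      · have hn' : (n : ℤ) = ((k : ℕ) : ℤ) + 1 := by
          exact_mod_cast congrArg Nat.cast (by omega : n = (k : ℕ) + 1)
        rw [dif_neg (by omega),
          cent_le n _ _ (by omega), cent_le n _ _ (by omega), hn']
        push_cast
        ring
    · -- j = k
      rw [if_pos (hjk.2 heq), heq]
      rcases Nat.lt_or_ge ((k : ℕ) + 1) n with hkn | hkn
      · rw [dif_pos hkn,
          cent_ge n _ _ (by omega), cent_ge n _ _ (by omega), cent_le n _ _ (by omega)]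
        rw [show (k : ℕ) + 1 + (k : ℕ) + 1 = 2 * (k : ℕ) + 2 by omega,
          show (k : ℕ) + 1 + ((k : ℕ) + 1) + 1 = 2 * (k : ℕ) + 3 by omega,
          show (k : ℕ) + 1 + ((k : ℕ) + 1 + 1) + 1 = 2 * (k : ℕ) + 4 by omega,
          npow, npow, npow]
        push_cast
        ring
      · have hn' : (n : ℤ) = ((k : ℕ) : ℤ) + 1 := by
          exact_mod_cast congrArg Nat.cast (by omega : n = (k : ℕ) + 1)
        rw [dif_neg (by omega),
          cent_ge n _ _ (by omega), cent_ge n _ _ (by omega)]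
        rw [show (k : ℕ) + 1 + (k : ℕ) + 1 = 2 * (k : ℕ) + 2 by omega,
          show (k : ℕ) + 1 + ((k : ℕ) + 1) + 1 = 2 * (k : ℕ) + 3 by omega,
          npow, npow, hn']
        push_cast
        ring
    · -- j > k : all cent_ge; note k+1 ≤ j < n so k+1 < n
      have hne : ¬(j = k) := fun h => absurd (hjk.1 h) (by omega)
      rw [if_neg hne, dif_pos (by omega),
        cent_ge n _ _ (by omega), cent_ge n _ _ (by omega), cent_ge n _ _ (by omega)]
      push_cast
      ring

theorem stmt_3 (n : ℕ) (hn : 1 ≤ n) (K : Type*) [Field K]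
    (hchar : ¬ (ringChar K ∣ 2 * n + 1)) :
    IsUnit ((Cmat n).map (fun x : ℤ => (x : K))) := by
  have hc : ((2 * (n : K) + 1)) ≠ 0 := by
    have := (CharP.cast_eq_zero_iff K (ringChar K) (2 * n + 1)).not.2 hchar
    push_cast at this
    exact this
  have hcast : (fun x : ℤ => (x : K)) = ⇑(Int.castRingHom K) := rfl
  have hmap : ((Cmat n).map (fun x : ℤ => (x : K))) * ((Bmat n).map (fun x : ℤ => (x : K)))
      = (2 * (n : K) + 1) • 1 := by
    rw [hcast, ← Matrix.map_mul, key_s3 n]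
    ext a b
    rw [Matrix.map_apply, Matrix.smul_apply, Matrix.smul_apply, Matrix.one_apply,
      Matrix.one_apply, smul_eq_mul, smul_eq_mul]
    split_ifs <;> simp [Int.coe_castRingHom] <;> push_cast <;> ring
  have hone : ((Cmat n).map (fun x : ℤ => (x : K))) *
      ((2 * (n : K) + 1)⁻¹ • (Bmat n).map (fun x : ℤ => (x : K))) = 1 := by
    rw [Matrix.mul_smul, hmap, smul_smul, inv_mul_cancel₀ hc, one_smul]
  letI := invertibleOfRightInverse _ _ hone
  exact isUnit_of_invertible _
end

section
/- Let n ≥ 1 and let K be a field of characteristic p > 0 with p dividing 2n+1 (in particular p ≠ 2). Then the n×n matrix C over K with entries C_{jk} = (-1)^(k-j+1)(2j-1)(n-k+1) for j ≤ k and C_{jk} = C_{kj} for j > k has rank exactly 1. -/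
lemma neg_one_pow_mod {K : Type*} [Field K] (a b : ℕ) (h : a % 2 = b % 2) :
    (-1 : K) ^ a = (-1 : K) ^ b := by
  conv_lhs => rw [← Nat.div_add_mod a 2]
  conv_rhs => rw [← Nat.div_add_mod b 2]
  rw [h, pow_add, pow_add, pow_mul, pow_mul]
  norm_num

theorem stmt_4 (n : ℕ) (hn : 1 ≤ n) (K : Type*) [Field K] (p : ℕ) (hp : p.Prime)
    [CharP K p] (hdvd : p ∣ 2 * n + 1) :
    ((Cmat n).map (fun x : ℤ => (x : K))).rank = 1 := by
  set A : Matrix (Fin n) (Fin n) K := (Cmat n).map (fun x : ℤ => (x : K)) with hAdef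
  have hpn : (2 * (n : K) + 1) = 0 := by
    have := (CharP.cast_eq_zero_iff K p (2 * n + 1)).mpr hdvd
    push_cast at this
    exact this
  set u : Fin n → K := fun j => (-1) ^ (j : ℕ) * (2 * ((j : ℕ) : K) + 1) with hu
  set v : Fin n → K := fun k => (-1) ^ ((k : ℕ) + 1) * ((n : K) - ((k : ℕ) : K)) with hv
  have hA : A = Matrix.vecMulVec u v := by
    ext j k
    simp only [hAdef, Matrix.map_apply, Cmat, Cent, Matrix.vecMulVec_apply, hu, hv]
    by_cases hjk : (j : ℕ) + 1 ≤ (k : ℕ) + 1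
    · rw [if_pos hjk]
      have he : (k : ℕ) + 1 - ((j : ℕ) + 1) + 1 = (k : ℕ) - (j : ℕ) + 1 := by omega
      rw [he]
      push_cast
      have hs : (-1 : K) ^ ((k : ℕ) - (j : ℕ) + 1) = (-1 : K) ^ ((j : ℕ) + ((k : ℕ) + 1)) := by
        apply neg_one_pow_mod
        omega
      rw [hs, pow_add]
      ring
    · rw [if_neg hjk]
      have hkj : (k : ℕ) < (j : ℕ) := by omega
      have he : (j : ℕ) + 1 - ((k : ℕ) + 1) + 1 = (j : ℕ) - (k : ℕ) + 1 := by omega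
      rw [he]
      push_cast
      have hs : (-1 : K) ^ ((j : ℕ) - (k : ℕ) + 1) = (-1 : K) ^ ((j : ℕ) + ((k : ℕ) + 1)) := by
        apply neg_one_pow_mod
        omega
      rw [hs]
      have key : (2 * ((k : ℕ) : K) + 1) * ((n : K) - ((j : ℕ) : K))
          = (2 * ((j : ℕ) : K) + 1) * ((n : K) - ((k : ℕ) : K)) := by
        linear_combination (((k : ℕ) : K) - ((j : ℕ) : K)) * hpn
      rw [pow_add]
      linear_combination ((-1 : K) ^ ((j : ℕ)) * (-1 : K) ^ ((k : ℕ) + 1)) * key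
  -- rank ≤ 1
  have hle : A.rank ≤ 1 := by
    rw [hA, Matrix.vecMulVec_eq Unit u v]
    refine le_trans (Matrix.rank_mul_le_left _ _) ?_
    simpa using Matrix.rank_le_card_width (Matrix.replicateCol Unit u)
  -- A ≠ 0
  have hne : A ≠ 0 := by
    intro h0
    have : A ⟨0, hn⟩ ⟨n - 1, by omega⟩ = 0 := by rw [h0]; rfl
    simp only [hAdef, Matrix.map_apply, Cmat, Cent] at this
    rw [if_pos (by omega : 0 + 1 ≤ n - 1 + 1)] at this
    have he : n - 1 + 1 - (0 + 1) + 1 = n := by omega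
    have he2 : ((n : ℤ) - (↑(n - 1 + 1)) + 1) = 1 := by
      have : n - 1 + 1 = n := by omega
      rw [this]; ring
    rw [he, he2] at this
    push_cast at this
    simp at this
  have hrne : A.rank ≠ 0 := by
    intro h0
    apply hne
    have hr : Module.finrank K (LinearMap.range A.mulVecLin) = 0 := h0
    have hbot : LinearMap.range A.mulVecLin = ⊥ := Submodule.finrank_eq_zero.mp hr
    have hz : A.mulVecLin = 0 := LinearMap.range_eq_bot.mp hbot
    ext j k
    have h := congrFun (LinearMap.congr_fun hz (Pi.single k 1)) j
    simpa [Matrix.mulVecLin_apply, Matrix.mulVec_single] using h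
  omega
end

section
/- Let n ≥ 1 and let C be the n×n integer matrix with C_{jk} = (-1)^(k-j+1)(2j-1)(n-k+1) for j ≤ k and C_{jk} = C_{kj} for j > k. For each 2 ≤ j ≤ n and 1 ≤ k ≤ n, define C'_{jk} = C_{jk} + (-1)^j (2j-1) C_{1k}. Then C'_{jk} = 0 whenever j ≤ k, and C'_{jk} = (-1)^(j-k+1)·(k-j)·(2n+1) whenever j > k. -/
theorem stmt_8 (n : ℕ) (hn : 1 ≤ n) (j k : ℕ) (hj2 : 2 ≤ j) (hjn : j ≤ n)
    (hk1 : 1 ≤ k) (hkn : k ≤ n) :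
    (j ≤ k → Cent n j k + (-1) ^ j * (2 * (j : ℤ) - 1) * Cent n 1 k = 0)
    ∧ (k < j → Cent n j k + (-1) ^ j * (2 * (j : ℤ) - 1) * Cent n 1 k
        = (-1) ^ (j - k + 1) * ((k : ℤ) - j) * (2 * (n : ℤ) + 1)) := by
  constructor
  · intro hjk
    obtain ⟨m, rfl⟩ := Nat.exists_eq_add_of_le hjk
    have hjj : ((-1:ℤ)) ^ j * (-1) ^ j = 1 := by
      rw [← pow_add]; exact Even.neg_one_pow ⟨j, rfl⟩
    simp only [Cent, if_pos hjk, if_pos (show 1 ≤ j + m by omega),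
      show j + m - j + 1 = m + 1 from by omega,
      show j + m - 1 + 1 = j + m from by omega,
      Nat.cast_add, pow_add, pow_succ, pow_one]
    push_cast
    linear_combination ((-1:ℤ)^m * (2*(j:ℤ)-1) * ((n:ℤ)-(j+m)+1)) * hjj
  · intro hkj
    obtain ⟨m, rfl⟩ := Nat.exists_eq_add_of_le hkj.le
    have hkk : ((-1:ℤ)) ^ k * (-1) ^ k = 1 := by
      rw [← pow_add]; exact Even.neg_one_pow ⟨k, rfl⟩
    simp only [Cent, if_neg (show ¬ k + m ≤ k by omega), if_pos hk1,
      show k + m - k + 1 = m + 1 from by omega,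
      show k - 1 + 1 = k from by omega,
      Nat.cast_add, pow_add, pow_succ, pow_one]
    push_cast
    linear_combination ((-1:ℤ)^m * (2*((k:ℤ)+m)-1) * ((n:ℤ)-k+1)) * hkk
end

section
/- Let n ≥ 1 and let M be the n×n integer matrix with entries M_{ij} = 2(n + 1 - max(i,j)) for 1 ≤ i, j ≤ n. Then det(M) = 2^n. -/
/-- The Cartan matrix of `P(L_n)`: `M_{ij} = 2(n + 1 - max(i,j))` (1-based). -/
def CartanL (n : ℕ) : Matrix (Fin n) (Fin n) ℤ :=
  fun i j => 2 * ((n : ℤ) + 1 - (max (i.val + 1) (j.val + 1) : ℕ))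

/-- Upper triangular matrix of ones. -/
def Uones (n : ℕ) : Matrix (Fin n) (Fin n) ℤ :=
  fun i k => if i ≤ k then 1 else 0

lemma sum_indicator (n : ℕ) (m : Fin n) :
    ∑ k : Fin n, (if m ≤ k then (1:ℤ) else 0) = (n : ℤ) - m.val := by
  rw [Finset.sum_boole]
  have : Finset.filter (fun k : Fin n => m ≤ k) Finset.univ = Finset.Ici m := by
    ext k; simp
  rw [this, Fin.card_Ici]
  push_cast [Nat.cast_sub m.isLt.le]
  ring

lemma factor (n : ℕ) : CartanL n = (2:ℤ) • (Uones n * (Uones n).transpose) := by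
  ext i j
  simp only [Matrix.smul_apply, Matrix.mul_apply, Matrix.transpose_apply, Uones, CartanL,
    smul_eq_mul, ite_mul, one_mul, zero_mul]
  have : ∀ k : Fin n, (if i ≤ k then (if j ≤ k then (1:ℤ) else 0) else 0)
      = (if max i j ≤ k then (1:ℤ) else 0) := by
    intro k
    by_cases h1 : i ≤ k <;> by_cases h2 : j ≤ k <;> simp [h1, h2, max_le_iff, *]
  rw [Finset.sum_congr rfl fun k _ => this k, sum_indicator n (max i j)]
  have hmax : ((max i j : Fin n) : ℕ) = max i.val j.val := by
    rcases le_total i j with h | h <;> simp [max_eq_right, max_eq_left, h, Fin.le_def (a := i)] <;> omega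
  rw [hmax]
  push_cast
  omega

lemma detU (n : ℕ) : (Uones n).det = 1 := by
  rw [Matrix.det_of_upperTriangular]
  · simp [Uones, Matrix.diag]
  · intro i j h
    simp only [Uones, ite_eq_right_iff]
    intro hle
    exact absurd hle (not_le.mpr h)

theorem stmt_9 (n : ℕ) (hn : 1 ≤ n) : (CartanL n).det = 2 ^ n := by
  rw [factor, Matrix.det_smul]
  simp [Matrix.det_mul, Matrix.det_transpose, detU]
end

section
/- Let n ≥ 1 and let ℚ be the rationals. Let D be the n×n adjacency matrix of L_n (D_{11} = 1, D_{i,i+1} = D_{i+1,i} = 1 for 1 ≤ i ≤ n-1, all other entries 0). Then the matrix 2·I_n + D is invertible over ℚ, and its inverse equals -(1/(2n+1))·C, where C is the symmetric matrix with C_{jk} = (-1)^(k-j+1)(2j-1)(n-k+1) for j ≤ k. -/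
def CentQ (n j k : ℕ) : ℚ :=
  if j ≤ k then (-1) ^ (k - j + 1) * (2 * (j : ℚ) - 1) * ((n : ℚ) - k + 1)
  else (-1) ^ (j - k + 1) * (2 * (k : ℚ) - 1) * ((n : ℚ) - j + 1)

def CmatQ (n : ℕ) : Matrix (Fin n) (Fin n) ℚ :=
  fun j k => CentQ n (j.val + 1) (k.val + 1)

def DmatQ (n : ℕ) : Matrix (Fin n) (Fin n) ℚ :=
  fun i j => if (i.val = 0 ∧ j.val = 0) ∨ i.val + 1 = j.val ∨ j.val + 1 = i.val then 1 else 0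

private lemma sum_pick {n : ℕ} (f : Fin n → ℚ) (c : ℕ) :
    (∑ j : Fin n, (if c = j.val then f j else 0))
      = if h : c < n then f ⟨c, h⟩ else 0 := by
  split
  next h =>
    rw [Finset.sum_eq_single (⟨c, h⟩ : Fin n)]
    · simp
    · intro b _ hb
      rw [if_neg]
      exact fun e => hb (Fin.ext e.symm)
    · simp
  next h =>
    apply Finset.sum_eq_zero
    intro j _
    rw [if_neg]
    exact fun e => h (e ▸ j.isLt)

private lemma scalar (n i k : ℕ) (hi : i < n) (hk : k < n) :
    2 * CentQ n (i+1) (k+1)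
    + (if i = 0 then CentQ n (0+1) (k+1) else 0)
    + (if i + 1 < n then CentQ n (i+1+1) (k+1) else 0)
    + (if i = 0 then 0 else CentQ n (i-1+1) (k+1))
    = if i = k then -(2*(n:ℚ)+1) else 0 := by
  rcases Nat.eq_zero_or_pos i with hi0 | hip
  · subst hi0
    rcases Nat.lt_or_ge 1 n with h2 | h1
    · -- n ≥ 2
      rcases Nat.eq_zero_or_pos k with hk0 | hkp
      · subst hk0
        simp only [if_pos rfl, if_pos h2, CentQ]
        norm_num
        ring
      · -- k ≥ 1
        have hik : (0 : ℕ) ≠ k := by omega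
        simp only [if_pos rfl, if_pos h2, if_neg hik, CentQ,
          if_pos (show 0+1 ≤ k+1 by omega), if_pos (show 0+1+1 ≤ k+1 by omega)]
        have e1 : k+1-(0+1)+1 = k+1 := by omega
        have e2 : k+1-(0+1+1)+1 = k := by omega
        rw [e1, e2]
        push_cast
        ring
    · -- n = 1
      have : n = 1 := by omega
      subst this
      have : k = 0 := by omega
      subst this
      simp only [if_pos rfl, CentQ]
      norm_num
  · -- i ≥ 1
    have hine : i ≠ 0 := by omega
    rcases Nat.lt_or_ge (i+1) n with hmid | hlast
    · -- middle row
      simp only [if_neg hine, if_pos hmid]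
      have e0 : i - 1 + 1 = i := by omega
      rw [e0]
      rcases Nat.lt_or_ge (k+2) i with c1 | hge
      ·
        obtain ⟨d, rfl⟩ : ∃ d, i = k + 2 + d := ⟨i - (k+2), by omega⟩
        simp only [CentQ, if_neg (show ¬ (k+2+d ≤ k+1) by omega),
          if_neg (show ¬ (k+2+d+1 ≤ k+1) by omega),
          if_neg (show ¬ (k+2+d+1+1 ≤ k+1) by omega),
          if_neg (show k+2+d ≠ k by omega)]
        have e1 : k+2+d - (k+1) + 1 = d + 2 := by omega
        have e2 : k+2+d+1 - (k+1) + 1 = d + 3 := by omega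
        have e3 : k+2+d+1+1 - (k+1) + 1 = d + 4 := by omega
        rw [e1, e2, e3]
        push_cast
        ring
      · rcases Nat.lt_or_ge (i+2) k with c2 | hle
        · -- k ≥ i + 2 (strict handled below too); here k > i+2
          obtain ⟨d, rfl⟩ : ∃ d, k = i + 2 + d := ⟨k - (i+2), by omega⟩
          simp only [CentQ, if_pos (show i ≤ i+2+d+1 by omega),
            if_pos (show i+1 ≤ i+2+d+1 by omega),
            if_pos (show i+1+1 ≤ i+2+d+1 by omega),
            if_neg (show i ≠ i+2+d by omega)]
          have e1 : i+2+d+1 - i + 1 = d + 4 := by omega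
          have e2 : i+2+d+1 - (i+1) + 1 = d + 3 := by omega
          have e3 : i+2+d+1 - (i+1+1) + 1 = d + 2 := by omega
          rw [e1, e2, e3]
          push_cast
          ring
        · -- i - 2 ≤ k ≤ i + 2 roughly; finite cases k ∈ {i-2?,...}
          -- remaining: k+2 ≥ i and k ≤ i+2, i.e. k ∈ {i-2, i-1, i, i+1, i+2}
          rcases (show k = i - 2 ∧ i ≥ 2 ∨ k = i - 1 ∨ k = i ∨ k = i + 1 ∨ k = i + 2 by omega) with ⟨h,h2⟩ | h | h | h | h
          · obtain ⟨d, rfl⟩ : ∃ d, i = k + 2 := ⟨0, by omega⟩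
            simp only [CentQ, if_neg (show ¬ (k+2 ≤ k+1) by omega),
              if_neg (show ¬ (k+2+1 ≤ k+1) by omega),
              if_neg (show ¬ (k+2+1+1 ≤ k+1) by omega),
              if_neg (show k+2 ≠ k by omega)]
            have e1 : k+2 - (k+1) + 1 = 2 := by omega
            have e2 : k+2+1 - (k+1) + 1 = 3 := by omega
            have e3 : k+2+1+1 - (k+1) + 1 = 4 := by omega
            rw [e1, e2, e3]
            push_cast
            ring
          · rw [show i = k + 1 by omega]
            simp only [CentQ, if_pos (show k+1 ≤ k+1 by omega),
              if_neg (show ¬ (k+1+1 ≤ k+1) by omega),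
              if_neg (show ¬ (k+1+1+1 ≤ k+1) by omega),
              if_neg (show k+1 ≠ k by omega)]
            have e1 : k+1 - (k+1) + 1 = 1 := by omega
            have e2 : k+1+1 - (k+1) + 1 = 2 := by omega
            have e3 : k+1+1+1 - (k+1) + 1 = 3 := by omega
            rw [e1, e2, e3]
            push_cast
            ring
          · rw [show k = i from h, if_pos rfl]
            simp only [CentQ, if_pos (show i ≤ i+1 by omega),
              if_pos (show i+1 ≤ i+1 by omega),
              if_neg (show ¬ (i+1+1 ≤ i+1) by omega)]
            have e1 : i+1 - i + 1 = 2 := by omega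
            have e2 : i+1 - (i+1) + 1 = 1 := by omega
            have e3 : i+1+1 - (i+1) + 1 = 2 := by omega
            rw [e1, e2, e3]
            push_cast
            ring
          · obtain ⟨d, rfl⟩ : ∃ d, k = i + 1 := ⟨0, by omega⟩
            simp only [CentQ, if_pos (show i ≤ i+1+1 by omega),
              if_pos (show i+1 ≤ i+1+1 by omega),
              if_pos (show i+1+1 ≤ i+1+1 by omega),
              if_neg (show i ≠ i+1 by omega)]
            have e1 : i+1+1 - i + 1 = 3 := by omega
            have e2 : i+1+1 - (i+1) + 1 = 2 := by omega
            have e3 : i+1+1 - (i+1+1) + 1 = 1 := by omega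
            rw [e1, e2, e3]
            push_cast
            ring
          · obtain ⟨d, rfl⟩ : ∃ d, k = i + 2 := ⟨0, by omega⟩
            simp only [CentQ, if_pos (show i ≤ i+2+1 by omega),
              if_pos (show i+1 ≤ i+2+1 by omega),
              if_pos (show i+1+1 ≤ i+2+1 by omega),
              if_neg (show i ≠ i+2 by omega)]
            have e1 : i+2+1 - i + 1 = 4 := by omega
            have e2 : i+2+1 - (i+1) + 1 = 3 := by omega
            have e3 : i+2+1 - (i+1+1) + 1 = 2 := by omega
            rw [e1, e2, e3]
            push_cast
            ring
    · -- last row : i + 1 = n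
      have hn' : i + 1 = n := by omega
      simp only [if_neg hine, if_neg (show ¬ (i+1 < n) by omega)]
      have e0 : i - 1 + 1 = i := by omega
      rw [e0]
      rcases Nat.lt_or_ge (k+1) i with c1 | hge
      · -- k + 1 < i : both else branches
        obtain ⟨d, rfl⟩ : ∃ d, i = k + 2 + d := ⟨i - (k+2), by omega⟩
        simp only [CentQ, if_neg (show ¬ (k+2+d ≤ k+1) by omega),
          if_neg (show ¬ (k+2+d+1 ≤ k+1) by omega),
          if_neg (show k+2+d ≠ k by omega)]
        have e1 : k+2+d - (k+1) + 1 = d + 2 := by omega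
        have e2 : k+2+d+1 - (k+1) + 1 = d + 3 := by omega
        rw [e1, e2]
        have hnn : ((n : ℚ)) = (k : ℚ) + 3 + d := by
          have : n = k + 3 + d := by omega
          rw [this]; push_cast; ring
        rw [hnn]
        push_cast
        ring
      · rcases (show k = i - 1 ∧ 1 ≤ i ∨ k = i by omega) with ⟨h, h1⟩ | h
        · obtain ⟨d, rfl⟩ : ∃ d, i = k + 1 := ⟨0, by omega⟩
          simp only [CentQ, if_pos (show k+1 ≤ k+1 by omega),
            if_neg (show ¬ (k+1+1 ≤ k+1) by omega),
            if_neg (show k+1 ≠ k by omega)]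
          have e1 : k+1 - (k+1) + 1 = 1 := by omega
          have e2 : k+1+1 - (k+1) + 1 = 2 := by omega
          rw [e1, e2]
          have hnn : ((n : ℚ)) = (k : ℚ) + 2 := by
            have : n = k + 2 := by omega
            rw [this]; push_cast; ring
          rw [hnn]
          push_cast
          ring
        · rw [show k = i from h, if_pos rfl]
          simp only [CentQ, if_pos (show i ≤ i+1 by omega),
            if_pos (show i+1 ≤ i+1 by omega)]
          have e1 : i+1 - i + 1 = 2 := by omega
          have e2 : i+1 - (i+1) + 1 = 1 := by omega
          rw [e1, e2]
          have hnn : ((n : ℚ)) = (i : ℚ) + 1 := by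
            have : n = i + 1 := by omega
            rw [this]; push_cast; ring
          rw [hnn]
          push_cast
          ring

private lemma key_s15 (n : ℕ) (hn : 1 ≤ n) :
    ((2 : ℚ) • (1 : Matrix (Fin n) (Fin n) ℚ) + DmatQ n) * CmatQ n
      = (-(2*(n:ℚ)+1)) • (1 : Matrix (Fin n) (Fin n) ℚ) := by
  ext i k
  rw [Matrix.add_mul, Matrix.smul_mul, Matrix.one_mul, Matrix.add_apply, Matrix.smul_apply]
  have hD : (DmatQ n * CmatQ n) i k
      = (∑ j : Fin n, (if (i.val = 0 ∧ j.val = 0) then CmatQ n j k else 0))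
      + (∑ j : Fin n, (if i.val + 1 = j.val then CmatQ n j k else 0))
      + (∑ j : Fin n, (if j.val + 1 = i.val then CmatQ n j k else 0)) := by
    rw [Matrix.mul_apply, ← Finset.sum_add_distrib, ← Finset.sum_add_distrib]
    apply Finset.sum_congr rfl
    intro j _
    unfold DmatQ
    split_ifs <;> first | ring1 | (exfalso; omega)
  have hS1 : (∑ j : Fin n, (if (i.val = 0 ∧ j.val = 0) then CmatQ n j k else 0))
      = if i.val = 0 then CentQ n (0+1) (k.val+1) else 0 := by
    rcases eq_or_ne i.val 0 with h | h
    · rw [if_pos h]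
      have : ∀ j : Fin n, (if (i.val = 0 ∧ j.val = 0) then CmatQ n j k else 0)
          = (if (0 : ℕ) = j.val then CmatQ n j k else 0) := by
        intro j
        by_cases hj : (0 : ℕ) = j.val
        · rw [if_pos ⟨h, hj.symm⟩, if_pos hj]
        · rw [if_neg (fun hc => hj hc.2.symm), if_neg hj]
      rw [Finset.sum_congr rfl (fun j _ => this j), sum_pick, dif_pos (by omega : 0 < n)]
      rfl
    · rw [if_neg h]
      apply Finset.sum_eq_zero
      intro j _
      rw [if_neg (fun hc => h hc.1)]
  have hS2 : (∑ j : Fin n, (if i.val + 1 = j.val then CmatQ n j k else 0))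
      = if i.val + 1 < n then CentQ n (i.val+1+1) (k.val+1) else 0 := by
    rw [sum_pick]
    split <;> rfl
  have hS3 : (∑ j : Fin n, (if j.val + 1 = i.val then CmatQ n j k else 0))
      = if i.val = 0 then 0 else CentQ n (i.val-1+1) (k.val+1) := by
    rcases eq_or_ne i.val 0 with h | h
    · rw [if_pos h]
      apply Finset.sum_eq_zero
      intro j _
      rw [if_neg (by omega)]
    · rw [if_neg h]
      have : ∀ j : Fin n, (if j.val + 1 = i.val then CmatQ n j k else 0)
          = (if i.val - 1 = j.val then CmatQ n j k else 0) := by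
        intro j
        by_cases hj : i.val - 1 = j.val
        · rw [if_pos (by omega), if_pos hj]
        · rw [if_neg (by omega), if_neg hj]
      rw [Finset.sum_congr rfl (fun j _ => this j), sum_pick,
        dif_pos (show i.val - 1 < n by have := i.isLt; omega)]
      rfl
  rw [hD, hS1, hS2, hS3]
  have := scalar n i.val k.val i.isLt k.isLt
  rw [Matrix.smul_apply, Matrix.one_apply]
  have hik : (i = k) ↔ (i.val = k.val) := Fin.ext_iff
  rcases eq_or_ne i.val k.val with h | h
  · rw [if_pos (hik.mpr h)]
    rw [if_pos h] at this
    have hC : CmatQ n i k = CentQ n (i.val+1) (k.val+1) := rfl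
    rw [hC]
    rw [smul_eq_mul, smul_eq_mul]
    linarith [this]
  · rw [if_neg (fun hc => h (hik.mp hc))]
    rw [if_neg h] at this
    have hC : CmatQ n i k = CentQ n (i.val+1) (k.val+1) := rfl
    rw [hC, smul_eq_mul, smul_eq_mul]
    linarith [this]

theorem stmt_15 (n : ℕ) (hn : 1 ≤ n) :
    IsUnit ((2 : ℚ) • (1 : Matrix (Fin n) (Fin n) ℚ) + DmatQ n)
    ∧ ((2 : ℚ) • (1 : Matrix (Fin n) (Fin n) ℚ) + DmatQ n)⁻¹
        = (-(1 / (2 * (n : ℚ) + 1))) • CmatQ n := by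
  have hne : (2 * (n : ℚ) + 1) ≠ 0 := by positivity
  have h1 : ((2 : ℚ) • (1 : Matrix (Fin n) (Fin n) ℚ) + DmatQ n)
      * ((-(1 / (2 * (n : ℚ) + 1))) • CmatQ n) = 1 := by
    rw [Matrix.mul_smul, key_s15 n hn, smul_smul]
    have : (-(1 / (2 * (n:ℚ) + 1))) * (-(2 * (n:ℚ) + 1)) = 1 := by
      field_simp
    rw [this, one_smul]
  refine ⟨?_, Matrix.inv_eq_right_inv h1⟩
  exact (Matrix.isUnit_iff_isUnit_det _).2 (Matrix.isUnit_det_of_right_inverse h1)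
end

section
/- Let p be an odd prime dividing 2n+1 and let C be the n×n matrix over 𝔽_p with C_{jk} = (-1)^(k-j+1)(2j-1)(n-k+1) for j ≤ k and C_{jk} = C_{kj} for j > k. Then for every 1 ≤ j, k ≤ n one has C_{jk} = (-1)^(j+1)·(2j-1)·C_{1k} in 𝔽_p; that is, the j-th row of C equals (-1)^(j+1)(2j-1) times the first row. -/
/-!
For `j ≤ k` the entry `C_{jk}` is `(2j - 1)` times `C_{1k}` up to sign. For `j > k` the symmetric
entry `(2k - 1)(n - j + 1)` differs from `(2j - 1)(n - k + 1)` by `(k - j)(2n + 1)`, which vanishes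
as soon as `2n + 1` does.
-/

lemma neg_one_pow_eq_of_mod_two_eq {R : Type*} [Ring R] {a b : ℕ}
    (h : a % 2 = b % 2) : (-1 : R) ^ a = (-1) ^ b := by
  rw [neg_one_pow_eq_pow_mod_two, h, ← neg_one_pow_eq_pow_mod_two]

lemma Cent_one_left (n : ℕ) {k : ℕ} (hk : 1 ≤ k) :
    Cent n 1 k = (-1) ^ k * ((n : ℤ) - k + 1) := by
  rw [Cent, if_pos hk, Nat.sub_add_cancel hk]
  ring

lemma two_mul_add_one_dvd_Cent_sub (n : ℕ) {j k : ℕ} (hk : 1 ≤ k) :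
    (2 * n + 1 : ℤ) ∣ Cent n j k - (-1) ^ (j + 1) * (2 * j - 1) * Cent n 1 k := by
  rw [Cent_one_left n hk, Cent]
  split_ifs with hjk
  · rw [neg_one_pow_eq_of_mod_two_eq (show (k - j + 1) % 2 = (j + 1 + k) % 2 by omega), pow_add]
    exact ⟨0, by ring⟩
  · rw [neg_one_pow_eq_of_mod_two_eq (show (j - k + 1) % 2 = (j + 1 + k) % 2 by omega), pow_add]
    exact ⟨(-1) ^ (j + 1) * (-1) ^ k * (k - j), by ring⟩

lemma Cent_cast_eq {R : Type*} [CommRing R] {n : ℕ} (hn : (2 * n + 1 : R) = 0) {j k : ℕ}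
    (hk : 1 ≤ k) :
    (Cent n j k : R) = (-1) ^ (j + 1) * (2 * j - 1) * Cent n 1 k := by
  obtain ⟨c, hc⟩ := two_mul_add_one_dvd_Cent_sub n hk
  have hcR := congrArg (Int.cast : ℤ → R) hc
  push_cast at hcR
  linear_combination hcR + c * hn

theorem stmt_17_general (n : ℕ) (hn : 0 < n) (p : ℕ)
    (hdvd : p ∣ 2 * n + 1) :
    ∀ j k : Fin n,
      ((Cmat n).map (fun x : ℤ => (x : ZMod p))) j k
        = (-1) ^ ((j.val + 1) + 1) * (2 * ((j.val : ZMod p) + 1) - 1)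
            * ((Cmat n).map (fun x : ℤ => (x : ZMod p))) (⟨0, hn⟩ : Fin n) k := by
  intro j k
  have h2n1 : (2 * n + 1 : ZMod p) = 0 := by
    exact_mod_cast (ZMod.natCast_eq_zero_iff (2 * n + 1) p).mpr hdvd
  simp only [Matrix.map_apply, Cmat]
  rw [Cent_cast_eq h2n1 (Nat.le_add_left 1 k.val)]
  push_cast
  ring

theorem stmt_17 (n : ℕ) (hn : 0 < n) (p : ℕ) (hp : p.Prime) (hp2 : p ≠ 2)
    (hdvd : p ∣ 2 * n + 1) :
    ∀ j k : Fin n,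
      ((Cmat n).map (fun x : ℤ => (x : ZMod p))) j k
        = (-1) ^ ((j.val + 1) + 1) * (2 * ((j.val : ZMod p) + 1) - 1)
            * ((Cmat n).map (fun x : ℤ => (x : ZMod p))) (⟨0, hn⟩ : Fin n) k :=
  stmt_17_general n hn p hdvd
end
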